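/- arXiv:2204.04696 — 4 statements merged into one kernel-verified Lean document; each statement's English description precedes it below -/
import Mathlib

section
/- Let (X,S) be an S-metric space, r ≥ 0, and suppose the sequence (x_n) converges to x in X (i.e., for every ε > 0 there exists k ∈ ℕ with S(x_n, x_n, x) < ε for all n ≥ k). Then the r-limit set of (x_n) equals the closed ball of radius r centered at x: LIM^r x_n = B_S[x,r] = { y ∈ X : S(y,y,x) ≤ r }. -/
/-- An S-metric on a set `X`. -/
structure SMetric (X : Type*) where
  S : X → X → X → ℝ
  nonneg : ∀ x y z, 0 ≤ S x y z
  eq_zero_iff : ∀ x y z, S x y z = 0 ↔ x = y ∧ y = z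
  tri : ∀ x y z a, S x y z ≤ S x x a + S y y a + S z z a

/-- `(x n)` is `r`-convergent to `p`. -/
def SMetric.RConv {X : Type*} (d : SMetric X) (r : ℝ) (x : ℕ → X) (p : X) : Prop :=
  ∀ ε > 0, ∃ k : ℕ, ∀ n ≥ k, d.S (x n) (x n) p < r + ε

/-- The `r`-limit set of `(x n)`. -/
def SMetric.rLimitSet {X : Type*} (d : SMetric X) (r : ℝ) (x : ℕ → X) : Set X :=
  {p | d.RConv r x p}

/-- `(x n)` converges to `p`. -/
def SMetric.Conv {X : Type*} (d : SMetric X) (x : ℕ → X) (p : X) : Prop :=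
  ∀ ε > 0, ∃ k : ℕ, ∀ n ≥ k, d.S (x n) (x n) p < ε

lemma SMetric.self_zero {X : Type*} (d : SMetric X) (a : X) : d.S a a a = 0 :=
  (d.eq_zero_iff a a a).mpr ⟨rfl, rfl⟩

lemma SMetric.symm {X : Type*} (d : SMetric X) (a b : X) : d.S a a b = d.S b b a := by
  have h1 := d.tri a a b a
  have h2 := d.tri b b a b
  rw [d.self_zero] at h1 h2
  linarith

/-- If the sequence converges to p, then its r-limit set equals the closed ball of
radius r centered at p. -/
theorem rLimitSet_eq_closedBall {X : Type*} (d : SMetric X) (r : ℝ) (hr : 0 ≤ r)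
    (x : ℕ → X) (p : X) (h : d.Conv x p) :
    d.rLimitSet r x = {y : X | d.S y y p ≤ r} := by
  ext y
  simp only [SMetric.rLimitSet, SMetric.RConv, Set.mem_setOf_eq]
  constructor
  · intro hy
    by_contra hc
    push_neg at hc
    set δ := (d.S y y p - r) / 4 with hδ
    have hδ0 : 0 < δ := by simp [hδ]; linarith
    obtain ⟨k1, hk1⟩ := h δ hδ0
    obtain ⟨k2, hk2⟩ := hy δ hδ0
    set n := max k1 k2
    have h1 := hk1 n (le_max_left _ _)
    have h2 := hk2 n (le_max_right _ _)
    have htri := d.tri p p y (x n)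
    rw [d.symm p (x n), d.symm y (x n), d.symm p y] at htri
    linarith
  · intro hy ε hε
    obtain ⟨k, hk⟩ := h (ε/2) (by linarith)
    refine ⟨k, fun n hn => ?_⟩
    have h1 := hk n hn
    have htri := d.tri (x n) (x n) y p
    linarith
end

section
/- Let (X,S) be an S-metric space, r ≥ 0, and let (x_n) be a sequence in X that is r-convergent to some point x ∈ X. Then (x_n) is bounded; that is, there exists a real number B > 0 such that S(x_n, x_n, x_m) < B for all n, m ∈ ℕ. -/
/-- Every r-convergent sequence is bounded. -/
theorem rConv_bounded {X : Type*} (d : SMetric X) (r : ℝ) (hr : 0 ≤ r)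
    (x : ℕ → X) (p : X) (h : d.RConv r x p) :
    ∃ B > 0, ∀ n m : ℕ, d.S (x n) (x n) (x m) < B := by
  obtain ⟨k, hk⟩ := h 1 one_pos
  set M := (Finset.range (k+1)).sup' Finset.nonempty_range_add_one
      (fun i => d.S (x i) (x i) p) with hM
  set C := max M (r + 1) with hC
  have key : ∀ n, d.S (x n) (x n) p ≤ C := by
    intro n
    rcases le_or_gt k n with hn | hn
    · exact le_trans (le_of_lt (hk n hn)) (le_max_right _ _)
    · exact le_trans
        (Finset.le_sup' (fun i => d.S (x i) (x i) p)
          (Finset.mem_range.mpr (by omega))) (le_max_left _ _)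
  have hC1 : (1 : ℝ) ≤ C := le_trans (by linarith) (le_max_right _ _)
  refine ⟨3 * C + 1, by linarith, fun n m => ?_⟩
  have := d.tri (x n) (x n) (x m) p
  have h1 := key n
  have h2 := key m
  linarith
end

section
/- Let (X,S) be an S-metric space, r > 0, and let (a_n) and (b_n) be sequences in X such that S(a_i, a_i, b_i) ≤ r/2 for all i ≥ k₁ for some k₁ ∈ ℕ. If (a_n) converges to ξ ∈ X, then (b_n) is r-convergent to ξ. -/
/-- If S(a_i, a_i, b_i) ≤ r/2 eventually and a_n converges to ξ, then b_n is
r-convergent to ξ. -/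
theorem rConv_of_close {X : Type*} (d : SMetric X) (r : ℝ) (hr : 0 < r)
    (a b : ℕ → X) (k₁ : ℕ) (hclose : ∀ i ≥ k₁, d.S (a i) (a i) (b i) ≤ r / 2)
    (ξ : X) (ha : d.Conv a ξ) : d.RConv r b ξ := by
  have hzero : ∀ x : X, d.S x x x = 0 := fun x => (d.eq_zero_iff x x x).mpr ⟨rfl, rfl⟩
  have hsymm : ∀ x y : X, d.S x x y = d.S y y x := by
    intro x y
    have h1 := d.tri x x y x
    have h2 := d.tri y y x y
    rw [hzero] at h1 h2
    linarith
  intro ε hε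
  obtain ⟨k₂, hk₂⟩ := ha ε hε
  refine ⟨max k₁ k₂, fun n hn => ?_⟩
  have h1 := hclose n (le_trans (le_max_left _ _) hn)
  have h2 := hk₂ n (le_trans (le_max_right _ _) hn)
  have htri := d.tri (b n) (b n) ξ (a n)
  rw [hsymm (b n) (a n), hsymm ξ (a n)] at htri
  linarith
end

section
/- Let (X,S) be an S-metric space, r ≥ 0, and let (x_n) be a sequence in X. If c ∈ X is a cluster point of (x_n), then LIM^r x_n ⊆ B_S[c,r]; that is, for every x ∈ LIM^r x_n one has S(x,x,c) ≤ r. -/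
/-- c is a cluster point of the sequence x. -/
def SMetric.IsClusterPt {X : Type*} (d : SMetric X) (x : ℕ → X) (c : X) : Prop :=
  ∀ ε > 0, ∀ p : ℕ, ∃ k : ℕ, k > p ∧ d.S (x k) (x k) c < ε

/-- If c is a cluster point of x_n, then the r-limit set is contained in the closed
ball of radius r centered at c. -/
theorem rLimitSet_subset_closedBall {X : Type*} (d : SMetric X) (r : ℝ) (hr : 0 ≤ r)
    (x : ℕ → X) (c : X) (hc : d.IsClusterPt x c) :
    ∀ p ∈ d.rLimitSet r x, d.S p p c ≤ r := by
  have hzero : ∀ a : X, d.S a a a = 0 := fun a => (d.eq_zero_iff a a a).2 ⟨rfl, rfl⟩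
  have hsym : ∀ a b : X, d.S a a b = d.S b b a := by
    intro a b
    have h1 := d.tri a a b a
    have h2 := d.tri b b a b
    rw [hzero] at h1 h2
    linarith
  intro p hp
  by_contra h
  push_neg at h
  set ε := (d.S p p c - r) / 3 with hε
  have hε3 : 0 < ε := by rw [hε]; linarith
  obtain ⟨k0, hk0⟩ := hp ε hε3
  obtain ⟨k, hk, hck⟩ := hc ε hε3 k0
  have hpk := hk0 k (le_of_lt hk)
  have htri := d.tri c c p (x k)
  rw [hsym c p, hsym c (x k), hsym p (x k)] at htri
  linarith
end
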